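/- For the Carreau law with r ∈ (1,2], ν > 0, ε > 0, there exist constants c > 0 and m ≥ 0 such that S(D):D ≥ −m + c(|D|^r + |S(D)|^{r'}) for all symmetric D, where 1/r + 1/r' = 1. -/

import Mathlib

/-- The Frobenius pairing `A : B = Σ_{ij} A_{ij} B_{ij}`. -/
def frob2 {d : ℕ} (A B : Fin d → Fin d → ℝ) : ℝ := ∑ i, ∑ j, A i j * B i j

/-- The Frobenius norm `|A| = (A:A)^{1/2}`. -/
noncomputable def fnorm {d : ℕ} (A : Fin d → Fin d → ℝ) : ℝ := Real.sqrt (frob2 A A)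

/-- The Carreau stress `S(D) = 2ν (ε² + |D|²)^{(r−2)/2} D`. -/
noncomputable def carreau {d : ℕ} (ν ε r : ℝ) (D : Fin d → Fin d → ℝ) :
    Fin d → Fin d → ℝ :=
  (2 * ν * (ε ^ 2 + fnorm D ^ 2) ^ ((r - 2) / 2)) • D

/-!
Write `t = |D|` and `E = ε² + t²`, so that `S(D) = g D` with `g = 2ν E^{(r-2)/2}`.
Both `|D|^r` and `|S(D)|^{r'} ≤ (2ν E^{(r-1)/2})^{r'}` are at most constant multiples of
`E^{r/2}`, because `(r - 1) r' = r`. On the other hand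
`S(D):D = g t² = 2ν E^{r/2} - g ε² ≥ 2ν E^{r/2} - 2ν ε^r`, since `E^{(r-2)/2} ≤ ε^{r-2}` for `r ≤ 2`.
Hence `c = 2ν / (1 + (2ν)^{r'})` and `m = 2ν ε^r` work.
-/

open Real

section Frobenius

variable {d : ℕ}

lemma frob2_self_nonneg (A : Fin d → Fin d → ℝ) : 0 ≤ frob2 A A :=
  Finset.sum_nonneg fun _ _ => Finset.sum_nonneg fun _ _ => mul_self_nonneg _

lemma frob2_smul_left (a : ℝ) (A B : Fin d → Fin d → ℝ) :
    frob2 (a • A) B = a * frob2 A B := by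
  simp [frob2, Finset.mul_sum, mul_assoc]

lemma fnorm_nonneg (A : Fin d → Fin d → ℝ) : 0 ≤ fnorm A := sqrt_nonneg _

lemma sq_fnorm (A : Fin d → Fin d → ℝ) : fnorm A ^ 2 = frob2 A A :=
  sq_sqrt (frob2_self_nonneg A)

lemma fnorm_smul_of_nonneg {a : ℝ} (ha : 0 ≤ a) (A : Fin d → Fin d → ℝ) :
    fnorm (a • A) = a * fnorm A := by
  have h : frob2 (a • A) (a • A) = a ^ 2 * frob2 A A := by
    simp only [frob2, Finset.mul_sum, Pi.smul_apply, smul_eq_mul]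
    ring_nf
  rw [fnorm, h, sqrt_mul (sq_nonneg a), sqrt_sq ha, fnorm]

lemma frob2_carreau_self (ν ε r : ℝ) (D : Fin d → Fin d → ℝ) :
    frob2 (carreau ν ε r D) D =
      2 * ν * (ε ^ 2 + fnorm D ^ 2) ^ ((r - 2) / 2) * fnorm D ^ 2 := by
  rw [carreau, frob2_smul_left, sq_fnorm]

lemma fnorm_carreau {ν : ℝ} (hν : 0 ≤ ν) (ε r : ℝ) (D : Fin d → Fin d → ℝ) :
    fnorm (carreau ν ε r D) = 2 * ν * (ε ^ 2 + fnorm D ^ 2) ^ ((r - 2) / 2) * fnorm D := by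
  rw [carreau, fnorm_smul_of_nonneg (by positivity)]

end Frobenius

section Scalar

variable {E t : ℝ}

lemma rpow_le_rpow_half_of_sq_le (ht : 0 ≤ t) (htE : t ^ 2 ≤ E) {p : ℝ} (hp : 0 ≤ p) :
    t ^ p ≤ E ^ (p / 2) := by
  calc t ^ p = (t ^ 2) ^ (p / 2) := by
        rw [← rpow_natCast t 2, ← rpow_mul ht]; push_cast; ring_nf
    _ ≤ E ^ (p / 2) := by gcongr

lemma rpow_sub_two_half_mul_le (hE : 0 < E) (ht : 0 ≤ t) (htE : t ^ 2 ≤ E) (r : ℝ) :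
    E ^ ((r - 2) / 2) * t ≤ E ^ ((r - 1) / 2) := by
  calc E ^ ((r - 2) / 2) * t ≤ E ^ ((r - 2) / 2) * E ^ ((1 : ℝ) / 2) := by
        gcongr; simpa using rpow_le_rpow_half_of_sq_le ht htE zero_le_one
    _ = E ^ ((r - 1) / 2) := by rw [← rpow_add hE]; ring_nf

lemma rpow_half_le_rpow_sub_two_half_mul_sq_add {ε : ℝ} (hε : 0 < ε) {r : ℝ} (hr : r ≤ 2)
    (t : ℝ) :
    (ε ^ 2 + t ^ 2) ^ (r / 2) ≤ (ε ^ 2 + t ^ 2) ^ ((r - 2) / 2) * t ^ 2 + ε ^ r := by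
  set E := ε ^ 2 + t ^ 2
  have hE : 0 < E := by positivity
  have hsplit : E ^ (r / 2) = E ^ ((r - 2) / 2) * t ^ 2 + E ^ ((r - 2) / 2) * ε ^ 2 := by
    rw [← mul_add, add_comm (t ^ 2), ← rpow_add_one hE.ne']; ring_nf
  have hε_term : E ^ ((r - 2) / 2) * ε ^ 2 ≤ ε ^ r := by
    calc E ^ ((r - 2) / 2) * ε ^ 2 ≤ (ε ^ 2) ^ ((r - 2) / 2) * ε ^ 2 := by
          gcongr (?_ : ℝ) * _
          exact rpow_le_rpow_of_nonpos (by positivity) (by simp [E, sq_nonneg])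
            (by linarith)
      _ = ε ^ r := by
          rw [← rpow_natCast ε 2, ← rpow_mul hε.le, ← rpow_add hε]; push_cast; ring_nf
  linarith

end Scalar

section Carreau

variable {d : ℕ} {ν ε : ℝ}

lemma fnorm_carreau_rpow_le (hν : 0 ≤ ν) (hε : 0 < ε) {r r' : ℝ} (hrr' : r.HolderConjugate r')
    (D : Fin d → Fin d → ℝ) :
    fnorm (carreau ν ε r D) ^ r' ≤ (2 * ν) ^ r' * (ε ^ 2 + fnorm D ^ 2) ^ (r / 2) := by
  set t := fnorm D
  set E := ε ^ 2 + t ^ 2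
  have ht : 0 ≤ t := fnorm_nonneg D
  have hE : 0 < E := by positivity
  have htE : t ^ 2 ≤ E := le_add_of_nonneg_left (sq_nonneg ε)
  calc fnorm (carreau ν ε r D) ^ r' = (2 * ν) ^ r' * (E ^ ((r - 2) / 2) * t) ^ r' := by
        rw [fnorm_carreau hν, mul_assoc, mul_rpow (by positivity) (by positivity)]
    _ ≤ (2 * ν) ^ r' * (E ^ ((r - 1) / 2)) ^ r' := by
        gcongr
        · exact hrr'.symm.nonneg
        · exact rpow_sub_two_half_mul_le hE ht htE r
    _ = (2 * ν) ^ r' * E ^ (r / 2) := by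
        rw [← rpow_mul hE.le, div_mul_eq_mul_div, hrr'.sub_one_mul_conj]

lemma rpow_half_le_frob2_carreau_self_add (hν : 0 ≤ ν) (hε : 0 < ε) {r : ℝ} (hr : r ≤ 2)
    (D : Fin d → Fin d → ℝ) :
    2 * ν * (ε ^ 2 + fnorm D ^ 2) ^ (r / 2) ≤ frob2 (carreau ν ε r D) D + 2 * ν * ε ^ r := by
  rw [frob2_carreau_self]
  nlinarith [rpow_half_le_rpow_sub_two_half_mul_sq_add hε hr (fnorm D)]

end Carreau

/-- Coercivity (`r`-graph property) of the Carreau law with `r ∈ (1,2]`: there are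
`c > 0` and `m ≥ 0` with `S(D):D ≥ −m + c(|D|^r + |S(D)|^{r'})` for all symmetric `D`,
where `1/r + 1/r' = 1`. -/
theorem stmt_11 {d : ℕ} (ν ε r r' : ℝ) (hν : 0 < ν) (hε : 0 < ε)
    (hr1 : 1 < r) (hr2 : r ≤ 2) (hconj : 1 / r + 1 / r' = 1) :
    ∃ c : ℝ, 0 < c ∧ ∃ m : ℝ, 0 ≤ m ∧
      ∀ D : Fin d → Fin d → ℝ, (∀ i j, D i j = D j i) →
        -m + c * (fnorm D ^ r + fnorm (carreau ν ε r D) ^ r') ≤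
          frob2 (carreau ν ε r D) D := by
  have hrr' : r.HolderConjugate r' := holderConjugate_iff.2 ⟨hr1, by simpa using hconj⟩
  set K := 1 + (2 * ν) ^ r'
  have hK : 0 < K := by positivity
  refine ⟨2 * ν / K, by positivity, 2 * ν * ε ^ r, by positivity, fun D _ => ?_⟩
  set E := ε ^ 2 + fnorm D ^ 2
  have hD : fnorm D ^ r ≤ E ^ (r / 2) :=
    rpow_le_rpow_half_of_sq_le (fnorm_nonneg D) (le_add_of_nonneg_left (sq_nonneg ε))
      hrr'.nonneg
  have hS := fnorm_carreau_rpow_le hν.le hε hrr' D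
  have hSD := rpow_half_le_frob2_carreau_self_add hν.le hε hr2 D
  calc -(2 * ν * ε ^ r) + 2 * ν / K * (fnorm D ^ r + fnorm (carreau ν ε r D) ^ r')
      ≤ -(2 * ν * ε ^ r) + 2 * ν / K * (K * E ^ (r / 2)) := by gcongr; linarith
    _ = 2 * ν * E ^ (r / 2) - 2 * ν * ε ^ r := by field_simp; ring
    _ ≤ frob2 (carreau ν ε r D) D := by linarith
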